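/- Fix a finite alphabet K, genome length n, X = (Fin n → K), a subset I ⊆ Fin n, a symmetric nonnegative similarity function φ on pairs of I-substrings, κ ≥ 0, and a strictly positive probability measure q on X of product form q(x) = q_{Λ∖I}(x_{Λ∖I})·q_I(x_I). Let μ : ℝ → (X → ℝ) be a differentiable family of probability measures solving the recombination-only equation dμ(x)/dt = κ·∑_{y_I} ( φ(y_I,x_I)·μ_I(x_I)·μ(x_{Λ∖I}, y_I) − φ(x_I,y_I)·μ_I(y_I)·μ(x) ). Then the quantity ∑_x (ln q(x))·μ(t)(x) is constant in t: its time derivative is zero at every t. -/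

import Mathlib

/-- The substring of a genome `x : Fin n → K` on a subset `I` of positions. -/
def subword {K : Type*} {n : ℕ} (I : Finset (Fin n)) (x : Fin n → K) : ↥I → K :=
  fun i => x i.1

/-- The marginal distribution of a measure `μ` on the genome space on a subset `I`. -/
def marginal {K : Type*} [Fintype K] [DecidableEq K] {n : ℕ}
    (μ : (Fin n → K) → ℝ) (I : Finset (Fin n)) (a : ↥I → K) : ℝ :=
  ∑ x : Fin n → K, if subword I x = a then μ x else 0

/-- `(x_{Λ∖I}, a)`: the genome obtained from `x` by replacing its restriction to `I`
with `a`. -/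
def substGenome {K : Type*} {n : ℕ} (I : Finset (Fin n)) (x : Fin n → K) (a : ↥I → K) :
    Fin n → K :=
  fun j => if h : j ∈ I then a ⟨j, h⟩ else x j

/-- The right-hand side of the recombination-only equation on the subset `I`. -/
def recRHS {K : Type*} [Fintype K] [DecidableEq K] {n : ℕ}
    (I : Finset (Fin n)) (φ : (↥I → K) → (↥I → K) → ℝ) (κ : ℝ)
    (μ : (Fin n → K) → ℝ) (x : Fin n → K) : ℝ :=
  κ * ∑ a : ↥I → K,
      (φ a (subword I x) * marginal μ I (subword I x) * μ (substGenome I x a)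
        - φ (subword I x) a * marginal μ I a * μ x)

/-!
Pairing the gain term of `recRHS` with the loss term through the involution
`(x, a) ↦ ((x_{Λ∖I}, a), x_I)` shows that, tested against any `F`, the recombination operator
only sees the increments `F (x_{Λ∖I}, a) - F x`. For `F = log q` with `q` of product form these
increments are `h a - h x_I` with `h = log q_I`, and the resulting double sum over pairs of
`I`-substrings is antisymmetric because `φ` is symmetric, hence zero.
-/

open Finset

section Genome

variable {K : Type*} {n : ℕ} (I : Finset (Fin n))

@[simp]
lemma subword_substGenome (x : Fin n → K) (a : ↥I → K) :
    subword I (substGenome I x a) = a := by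
  funext i
  simp [subword, substGenome, i.2]

@[simp]
lemma subword_compl_substGenome (x : Fin n → K) (a : ↥I → K) :
    subword Iᶜ (substGenome I x a) = subword Iᶜ x := by
  funext i
  have hi : i.1 ∉ I := Finset.mem_compl.mp i.2
  simp [subword, substGenome, hi]

@[simp]
lemma substGenome_substGenome (x : Fin n → K) (a b : ↥I → K) :
    substGenome I (substGenome I x a) b = substGenome I x b := by
  funext j
  by_cases h : j ∈ I <;> simp [substGenome, h]

@[simp]
lemma substGenome_subword (x : Fin n → K) : substGenome I x (subword I x) = x := by
  funext j
  by_cases h : j ∈ I <;> simp [substGenome, subword, h]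

lemma involutive_substGenome_subword :
    Function.Involutive
      fun p : (Fin n → K) × (↥I → K) => (substGenome I p.1 p.2, subword I p.1) := by
  intro p
  simp

lemma log_substGenome_sub_log {q : (Fin n → K) → ℝ} {g : (↥Iᶜ → K) → ℝ}
    {h : (↥I → K) → ℝ} (hq : ∀ x, q x ≠ 0)
    (hq_prod : ∀ x, q x = g (subword Iᶜ x) * h (subword I x))
    (x : Fin n → K) (a : ↥I → K) :
    Real.log (q (substGenome I x a)) - Real.log (q x) =
      Real.log (h a) - Real.log (h (subword I x)) := by
  have hxa := hq (substGenome I x a)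
  have hx := hq x
  rw [hq_prod, subword_compl_substGenome, subword_substGenome] at hxa ⊢
  rw [hq_prod] at hx ⊢
  rw [Real.log_mul (left_ne_zero_of_mul hx) (right_ne_zero_of_mul hxa),
    Real.log_mul (left_ne_zero_of_mul hx) (right_ne_zero_of_mul hx)]
  ring

variable [Fintype K]

lemma sum_sum_substGenome_subword (g : (Fin n → K) → (↥I → K) → ℝ) :
    ∑ x, ∑ a, g (substGenome I x a) (subword I x) = ∑ x, ∑ a, g x a := by
  simpa only [Fintype.sum_prod_type, Function.Involutive.coe_toPerm] using
    Equiv.sum_comp (involutive_substGenome_subword (K := K) I).toPerm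
      fun p : (Fin n → K) × (↥I → K) => g p.1 p.2

lemma sum_mul_marginal [DecidableEq K] (f : (↥I → K) → ℝ) (μ : (Fin n → K) → ℝ) :
    ∑ c, f c * marginal μ I c = ∑ x, f (subword I x) * μ x := by
  simp only [marginal, mul_sum, mul_ite, mul_zero]
  rw [sum_comm]
  simp

end Genome

lemma sum_sum_sub_mul_eq_zero {α : Type*} [Fintype α] (h : α → ℝ) (w : α → α → ℝ)
    (hw : ∀ a b, w a b = w b a) : ∑ c, ∑ a, (h a - h c) * w c a = 0 := by
  have hneg : ∑ c, ∑ a, (h a - h c) * w c a = -∑ c, ∑ a, (h a - h c) * w c a := by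
    conv_lhs => rw [sum_comm]
    simp only [← sum_neg_distrib]
    refine sum_congr rfl fun c _ => sum_congr rfl fun a _ => ?_
    rw [hw]
    ring
  linarith

section Recombination

variable {K : Type*} [Fintype K] [DecidableEq K] {n : ℕ} (I : Finset (Fin n))
  (φ : (↥I → K) → (↥I → K) → ℝ) (κ : ℝ) (μ : (Fin n → K) → ℝ)

lemma sum_mul_recRHS (F : (Fin n → K) → ℝ) :
    ∑ x, F x * recRHS I φ κ μ x =
      κ * ∑ x, ∑ a,
        (F (substGenome I x a) - F x) * (φ (subword I x) a * marginal μ I a * μ x) := by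
  have gain := sum_sum_substGenome_subword I
    fun y b => F (substGenome I y b) * (φ (subword I y) b * marginal μ I b * μ y)
  simp only [substGenome_substGenome, subword_substGenome, substGenome_subword] at gain
  simp only [recRHS, sub_mul, mul_sub, sum_sub_distrib]
  rw [← gain]
  simp only [mul_sum]
  congr 1 <;> refine sum_congr rfl fun x _ => sum_congr rfl fun a _ => by ring

lemma sum_mul_recRHS_eq_zero (hφ : ∀ a b, φ a b = φ b a) (F : (Fin n → K) → ℝ)
    (h : (↥I → K) → ℝ) (hF : ∀ x a, F (substGenome I x a) - F x = h a - h (subword I x)) :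
    ∑ x, F x * recRHS I φ κ μ x = 0 := by
  have hsplit : ∑ x, ∑ a,
        (F (substGenome I x a) - F x) * (φ (subword I x) a * marginal μ I a * μ x)
      = ∑ c, ∑ a, (h a - h c) * (φ c a * marginal μ I a * marginal μ I c) := by
    simp only [← mul_assoc, ← sum_mul]
    rw [sum_mul_marginal I (fun c => ∑ a, (h a - h c) * φ c a * marginal μ I a) μ]
    simp only [hF, sum_mul]
  rw [sum_mul_recRHS, hsplit, sum_sum_sub_mul_eq_zero h _ fun c a => by rw [hφ]; ring, mul_zero]

end Recombination

theorem recombination_conserves_log_mean_general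
    {K : Type*} [Fintype K] [DecidableEq K] {n : ℕ}
    (I : Finset (Fin n))
    (φ : (↥I → K) → (↥I → K) → ℝ)
    (hφ_symm : ∀ a b, φ a b = φ b a)
    (κ : ℝ)
    (q : (Fin n → K) → ℝ)
    (hq_pos : ∀ x, 0 < q x)
    (hq_prod : ∀ x, q x = marginal q Iᶜ (subword Iᶜ x) * marginal q I (subword I x))
    (μ : ℝ → (Fin n → K) → ℝ)
    (hμ_ode : ∀ t x, HasDerivAt (fun s => μ s x) (recRHS I φ κ (μ t) x) t) :
    ∀ t : ℝ, deriv (fun s => ∑ x, Real.log (q x) * μ s x) t = 0 := by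
  intro t
  have hderiv : HasDerivAt (fun s => ∑ x, Real.log (q x) * μ s x)
      (∑ x, Real.log (q x) * recRHS I φ κ (μ t) x) t :=
    HasDerivAt.fun_sum fun x _ => (hμ_ode t x).const_mul _
  rw [hderiv.deriv]
  exact sum_mul_recRHS_eq_zero I φ κ (μ t) hφ_symm _ _
    (log_substGenome_sub_log I (fun x => (hq_pos x).ne') hq_prod)

/-- along any differentiable solution of the recombination-only equation,
the mean of `ln q` with respect to `μ(t)`, for a strictly positive probability measure `q`
of product form across `I` and its complement, is constant in time: its derivative
vanishes at every `t`. -/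
theorem recombination_conserves_log_mean
    {K : Type*} [Fintype K] [DecidableEq K] {n : ℕ}
    (I : Finset (Fin n))
    (φ : (↥I → K) → (↥I → K) → ℝ)
    (hφ_symm : ∀ a b, φ a b = φ b a)
    (hφ_nonneg : ∀ a b, 0 ≤ φ a b)
    (κ : ℝ) (hκ : 0 ≤ κ)
    (q : (Fin n → K) → ℝ)
    (hq_pos : ∀ x, 0 < q x)
    (hq_sum : ∑ x, q x = 1)
    (hq_prod : ∀ x, q x = marginal q Iᶜ (subword Iᶜ x) * marginal q I (subword I x))
    (μ : ℝ → (Fin n → K) → ℝ)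
    (hμ_nonneg : ∀ t x, 0 ≤ μ t x)
    (hμ_sum : ∀ t, ∑ x, μ t x = 1)
    (hμ_ode : ∀ t x, HasDerivAt (fun s => μ s x) (recRHS I φ κ (μ t) x) t) :
    ∀ t : ℝ, deriv (fun s => ∑ x, Real.log (q x) * μ s x) t = 0 :=
  recombination_conserves_log_mean_general I φ hφ_symm κ q hq_pos hq_prod μ hμ_ode
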